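/- Fix n ≥ 1 and k ≥ 1. For u ∈ C_c^∞(ℝ^n) (smooth and compactly supported) and 0 ≤ j ≤ k, define the weighted norms D_j(u) = ‖ |∇^j u(z)| · ⟨z⟩^{j + (1−n)/2} ‖_{L²(ℝ^n)}, where ⟨z⟩ = (1 + |z|²)^{1/2} and |∇^j u| denotes the norm of the j-th total derivative. Then for every ν > 0 and every 0 ≤ j < k there exists a constant C(ν, j, k, n), independent of u, such that D_j(u) ≤ ν D_k(u) + C(ν, j, k, n) D_0(u). -/

import Mathlib

open MeasureTheory

/-- The weighted norm `D_j(u) = ‖ |∇ʲu(z)| ⟨z⟩^{j+(1−n)/2} ‖_{L²(ℝⁿ)}`, where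
`⟨z⟩ = √(1+|z|²)` is the Japanese bracket. -/
noncomputable def Dnorm (n j : ℕ) (u : EuclideanSpace ℝ (Fin n) → ℝ) : ℝ :=
  Real.sqrt (∫ z : EuclideanSpace ℝ (Fin n),
    (‖iteratedFDeriv ℝ j u z‖ * Real.sqrt (1 + ‖z‖^2) ^ ((j:ℝ) + (1 - (n:ℝ))/2))^2)

/-!
Write `L_j(u) = D_j(u)² = ∫ |∇ʲu|² ⟨z⟩^(2j+a)` (`weightedDerivSq a j u`) with `a = 1 - n`.
For a direction `v` with `|v| ≤ 1` and `f` smooth with compact support, one integration by parts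
along `v` gives `∫ (∂ᵥf)² ⟨z⟩^b = -∫ ∂ᵥ((∂ᵥf) ⟨z⟩^b) f`. Since `|∂ᵥ⟨z⟩^b| ≤ |b| ⟨z⟩^(b-1)`,
Young's inequality bounds the right side by `δ ∫ (∂ᵥ²f)² ⟨z⟩^(b+2) + (δ⁻¹ + b²) ∫ f² ⟨z⟩^(b-2)`
plus half the left side. Applied to the coordinate derivatives `f = ∂ᵐu` of an orthonormal basis,
which control `|∇ʲu|` up to a dimensional factor, this yields `L_{j+1} ≤ ε L_{j+2} + C_ε L_j` for
every `ε > 0`. An induction with absorption turns these one-step bounds into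
`L_j ≤ ε L_k + C L_0` for `j < k`, and taking square roots gives the theorem.
-/

def EhrlingBound {α : Type*} (s : Set α) (p : α → ℕ → ℝ) (i j k : ℕ) : Prop :=
  ∀ ε > 0, ∃ C, 0 ≤ C ∧ ∀ x ∈ s, p x j ≤ ε * p x k + C * p x i

namespace EhrlingBound

variable {α : Type*} {s : Set α} {p : α → ℕ → ℝ}

theorem refl_left (hp : ∀ x ∈ s, ∀ j, 0 ≤ p x j) (i k : ℕ) : EhrlingBound s p i i k :=
  fun ε hε => ⟨1, zero_le_one, fun x hx => by nlinarith [hp x hx k]⟩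

theorem trans {i j k l : ℕ} (hjk : EhrlingBound s p i j k) (hkl : EhrlingBound s p i k l) :
    EhrlingBound s p i j l := by
  intro ε hε
  obtain ⟨C₁, hC₁, h₁⟩ := hjk 1 one_pos
  obtain ⟨C₂, hC₂, h₂⟩ := hkl ε hε
  refine ⟨C₁ + C₂, by positivity, fun x hx => ?_⟩
  linarith [h₁ x hx, h₂ x hx]

theorem succ_of_step (hp : ∀ x ∈ s, ∀ j, 0 ≤ p x j)
    (hstep : ∀ j, EhrlingBound s p j (j + 1) (j + 2)) (j : ℕ) : EhrlingBound s p 0 j (j + 1) := by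
  induction j with
  | zero => exact refl_left hp 0 1
  | succ j ih =>
    intro ε hε
    obtain ⟨C₁, hC₁, h₁⟩ := hstep j (ε / 2) (half_pos hε)
    obtain ⟨C₂, hC₂, h₂⟩ := ih (2 * C₁ + 1)⁻¹ (by positivity)
    refine ⟨2 * C₁ * C₂, by positivity, fun x hx => ?_⟩
    have habsorb : C₁ * (2 * C₁ + 1)⁻¹ ≤ 1 / 2 := by
      rw [← div_eq_mul_inv, div_le_iff₀ (by positivity)]
      linarith
    have : p x (j + 1) ≤ ε / 2 * p x (j + 2) + (1 / 2 * p x (j + 1) + C₁ * C₂ * p x 0) :=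
      calc p x (j + 1) ≤ ε / 2 * p x (j + 2) + C₁ * p x j := h₁ x hx
        _ ≤ ε / 2 * p x (j + 2) + C₁ * ((2 * C₁ + 1)⁻¹ * p x (j + 1) + C₂ * p x 0) := by
          gcongr
          exact h₂ x hx
        _ ≤ ε / 2 * p x (j + 2) + (1 / 2 * p x (j + 1) + C₁ * C₂ * p x 0) := by
          rw [mul_add, ← mul_assoc, ← mul_assoc]
          gcongr
          exact hp x hx _
    linarith

theorem of_step (hp : ∀ x ∈ s, ∀ j, 0 ≤ p x j) (hstep : ∀ j, EhrlingBound s p j (j + 1) (j + 2))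
    {j k : ℕ} (hjk : j < k) : EhrlingBound s p 0 j k := by
  induction k, hjk using Nat.le_induction with
  | base => exact succ_of_step hp hstep j
  | succ k _ ih => exact ih.trans (succ_of_step hp hstep k)

end EhrlingBound

theorem young_rpow_weights {t a p q r d δ : ℝ} (ht : 0 < t) (hδ : 0 < δ)
    (hd : |d| ≤ |a| * t ^ (a - 1)) :
    -((p * d + t ^ a * q) * r) ≤
      δ / 2 * (q ^ 2 * t ^ (a + 2)) + 1 / 2 * (p ^ 2 * t ^ a)
        + (δ⁻¹ + a ^ 2) / 2 * (r ^ 2 * t ^ (a - 2)) := by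
  rw [Real.rpow_sub_one ht.ne'] at hd
  rw [Real.rpow_add ht, Real.rpow_sub ht, Real.rpow_two]
  have hs : 0 < t ^ a := Real.rpow_pos_of_pos ht a
  generalize t ^ a = s at *
  have hq : -(q * r) ≤ δ / 2 * (q * t) ^ 2 + δ⁻¹ / 2 * (r / t) ^ 2 := by
    have := two_mul_le_add_mul_sq (a := -(q * t)) (b := r / t) hδ
    field_simp at this ⊢
    linarith
  have hp : -(p * d * r) ≤ s * (1 / 2 * p ^ 2 + a ^ 2 / 2 * (r / t) ^ 2) := by
    have hyoung := two_mul_le_add_sq |p| (|a| * |r| / t)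
    calc -(p * d * r) ≤ |p| * |d| * |r| := by
          rw [← abs_mul, ← abs_mul]
          exact neg_le_abs _
      _ ≤ |p| * (|a| * (s / t)) * |r| := by gcongr
      _ = s * (|p| * (|a| * |r| / t)) := by ring
      _ ≤ s * (1 / 2 * p ^ 2 + a ^ 2 / 2 * (r / t) ^ 2) := by
          gcongr
          simp only [div_pow, mul_pow, sq_abs] at hyoung ⊢
          linear_combination hyoung / 2
  calc -((p * d + s * q) * r) = -(p * d * r) + s * -(q * r) := by ring
    _ ≤ _ := add_le_add hp (mul_le_mul_of_nonneg_left hq hs.le)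
    _ = _ := by field_simp; ring

theorem Continuous.integrable_sq_mul_of_hasCompactSupport {X : Type*} [TopologicalSpace X]
    [MeasurableSpace X] [OpensMeasurableSpace X] {μ : Measure X} [IsFiniteMeasureOnCompacts μ]
    {f w : X → ℝ} (hf : Continuous f) (hfc : HasCompactSupport f) (hw : Continuous w) :
    Integrable (fun z => f z ^ 2 * w z) μ :=
  ((hf.pow 2).mul hw).integrable_of_hasCompactSupport
    (hfc.comp_left (g := (· ^ 2)) (zero_pow two_ne_zero)).mul_right

section JapaneseBracket

variable {E : Type*} [NormedAddCommGroup E]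

noncomputable def japaneseBracket (z : E) : ℝ := √(1 + ‖z‖ ^ 2)

theorem japaneseBracket_pos (z : E) : 0 < japaneseBracket z := by
  unfold japaneseBracket
  positivity

theorem japaneseBracket_rpow_nonneg (z : E) (b : ℝ) : 0 ≤ japaneseBracket z ^ b :=
  Real.rpow_nonneg (japaneseBracket_pos z).le b

theorem norm_le_japaneseBracket (z : E) : ‖z‖ ≤ japaneseBracket z :=
  Real.le_sqrt_of_sq_le (by linarith)

theorem continuous_japaneseBracket_rpow (b : ℝ) : Continuous fun z : E => japaneseBracket z ^ b :=
  ((continuous_const.add (continuous_norm.pow 2)).sqrt).rpow_const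
    fun z => Or.inl (japaneseBracket_pos z).ne'

variable [InnerProductSpace ℝ E]

theorem contDiff_japaneseBracket_rpow (a : ℝ) {m : WithTop ℕ∞} :
    ContDiff ℝ m fun z : E => japaneseBracket z ^ a :=
  (((contDiff_const.add (contDiff_norm_sq ℝ)).sqrt fun z => by positivity).rpow_const_of_ne
    fun z => (japaneseBracket_pos z).ne')

theorem hasFDerivAt_japaneseBracket_rpow (a : ℝ) (z : E) :
    HasFDerivAt (fun z : E => japaneseBracket z ^ a)
      ((a * japaneseBracket z ^ (a - 1) / japaneseBracket z) • innerSL ℝ z) z := by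
  unfold japaneseBracket
  convert (((hasStrictFDerivAt_norm_sq z).hasFDerivAt.const_add 1).sqrt
    (by positivity)).rpow_const (p := a) (Or.inl (japaneseBracket_pos z).ne') using 1
  ext v
  simp only [smul_apply, coe_innerSL_apply, smul_eq_mul, one_div, mul_inv_rev, nsmul_eq_mul,
    Nat.cast_ofNat]
  field_simp

theorem abs_fderiv_japaneseBracket_rpow_le (a : ℝ) (z : E) {v : E} (hv : ‖v‖ ≤ 1) :
    |fderiv ℝ (fun z : E => japaneseBracket z ^ a) z v| ≤ |a| * japaneseBracket z ^ (a - 1) := by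
  have ht := japaneseBracket_pos z
  have hinner : |inner ℝ z v| ≤ japaneseBracket z :=
    calc |inner ℝ z v| ≤ ‖z‖ * ‖v‖ := abs_real_inner_le_norm z v
      _ ≤ japaneseBracket z * 1 := by gcongr; exact norm_le_japaneseBracket z
      _ = japaneseBracket z := mul_one _
  rw [(hasFDerivAt_japaneseBracket_rpow a z).fderiv, smul_apply, innerSL_apply_apply, smul_eq_mul,
    abs_mul, abs_div, abs_mul, abs_of_pos ht, abs_of_pos (Real.rpow_pos_of_pos ht _)]
  calc |a| * japaneseBracket z ^ (a - 1) / japaneseBracket z * |inner ℝ z v|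
      ≤ |a| * japaneseBracket z ^ (a - 1) / japaneseBracket z * japaneseBracket z := by gcongr
    _ = |a| * japaneseBracket z ^ (a - 1) := by field_simp

end JapaneseBracket

section Multilinear

variable {E ι : Type*} [NormedAddCommGroup E] [InnerProductSpace ℝ E] [Fintype ι]

theorem ContinuousMultilinearMap.sq_apply_le_norm_sq {j : ℕ}
    (T : ContinuousMultilinearMap ℝ (fun _ : Fin j => E) ℝ) {m : Fin j → E}
    (hm : ∀ i, ‖m i‖ ≤ 1) : T m ^ 2 ≤ ‖T‖ ^ 2 := by
  rw [← sq_abs, ← Real.norm_eq_abs]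
  exact pow_le_pow_left₀ (norm_nonneg _)
    (T.unit_le_opNorm ((pi_norm_le_iff_of_nonneg zero_le_one).mpr hm)) 2

theorem ContinuousMultilinearMap.norm_le_sum_abs_apply_basis (b : OrthonormalBasis ι ℝ E)
    {j : ℕ} (T : ContinuousMultilinearMap ℝ (fun _ : Fin j => E) ℝ) :
    ‖T‖ ≤ ∑ m : Fin j → ι, |T fun i => b (m i)| := by
  classical
  refine T.opNorm_le_bound (by positivity) fun x => ?_
  have hx : T x = ∑ m : Fin j → ι, (∏ i, inner ℝ (b (m i)) (x i)) * T fun i => b (m i) := by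
    conv_lhs => rw [← funext fun i => b.sum_repr' (x i)]
    simp only [T.map_sum, T.map_smul_univ, smul_eq_mul]
  rw [hx, Finset.sum_mul]
  refine (norm_sum_le _ _).trans (Finset.sum_le_sum fun m _ => ?_)
  rw [norm_mul, Real.norm_eq_abs, Real.norm_eq_abs, mul_comm, Finset.abs_prod]
  gcongr with i
  simpa [b.orthonormal.1 (m i)] using abs_real_inner_le_norm (b (m i)) (x i)

theorem ContinuousMultilinearMap.norm_sq_le_card_mul_sum_sq (b : OrthonormalBasis ι ℝ E)
    {j : ℕ} (T : ContinuousMultilinearMap ℝ (fun _ : Fin j => E) ℝ) :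
    ‖T‖ ^ 2 ≤ Fintype.card (Fin j → ι) * ∑ m : Fin j → ι, (T fun i => b (m i)) ^ 2 :=
  calc ‖T‖ ^ 2 ≤ (∑ m : Fin j → ι, |T fun i => b (m i)|) ^ 2 :=
        pow_le_pow_left₀ (norm_nonneg _) (T.norm_le_sum_abs_apply_basis b) 2
    _ ≤ _ := by
        simpa only [sq_abs, Finset.card_univ] using
          sq_sum_le_card_mul_sum_sq (s := .univ) (f := fun m : Fin j → ι => |T fun i => b (m i)|)

end Multilinear

section IntegrationByParts

variable {E : Type*} [NormedAddCommGroup E] [NormedSpace ℝ E] [FiniteDimensional ℝ E]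
  [MeasureSpace E] [BorelSpace E] [(volume : Measure E).IsAddHaarMeasure]

theorem integral_fderiv_sq_mul_eq_neg {f w : E → ℝ} (hf : ContDiff ℝ 2 f)
    (hfc : HasCompactSupport f) (hw : ContDiff ℝ 1 w) (v : E) :
    ∫ z, fderiv ℝ f z v ^ 2 * w z =
      -∫ z, (fderiv ℝ f z v * fderiv ℝ w z v
        + w z * fderiv ℝ (fun y => fderiv ℝ f y v) z v) * f z := by
  set Df : E → ℝ := fun y => fderiv ℝ f y v
  have hDf : ContDiff ℝ 1 Df := (hf.fderiv_right (m := 1) le_rfl).clm_apply contDiff_const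
  have hDfc : HasCompactSupport Df := hfc.fderiv_apply (𝕜 := ℝ) v
  have hderiv : ∀ z, fderiv ℝ (fun z => Df z * w z) z v
      = Df z * fderiv ℝ w z v + w z * fderiv ℝ Df z v := fun z => by
    rw [fderiv_fun_mul (hDf.differentiable one_ne_zero z) (hw.differentiable one_ne_zero z)]
    rfl
  have hcont : Continuous fun z => Df z * fderiv ℝ w z v + w z * fderiv ℝ Df z v :=
    (hDf.continuous.mul ((hw.continuous_fderiv one_ne_zero).clm_apply continuous_const)).add
      (hw.continuous.mul ((hDf.continuous_fderiv one_ne_zero).clm_apply continuous_const))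
  have hint : Integrable fun z => (Df z * fderiv ℝ w z v + w z * fderiv ℝ Df z v) * f z :=
    (hcont.mul hf.continuous).integrable_of_hasCompactSupport hfc.mul_left
  have hibp := integral_mul_fderiv_eq_neg_fderiv_mul_of_integrable
    (f := fun z => Df z * w z) (g := f) (v := v) (by simpa only [hderiv] using hint)
    (((hDf.continuous.mul hw.continuous).mul hDf.continuous).integrable_of_hasCompactSupport
      hDfc.mul_left)
    (((hDf.continuous.mul hw.continuous).mul hf.continuous).integrable_of_hasCompactSupport
      hfc.mul_left)
    (fun z _ => (hDf.mul hw).differentiable one_ne_zero z)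
    (fun z _ => hf.differentiable two_ne_zero z)
  simp only [hderiv] at hibp
  convert hibp using 1
  congr 1 with z
  simp only [Df]
  ring

end IntegrationByParts

section WeightedEstimate

variable {E : Type*} [NormedAddCommGroup E] [InnerProductSpace ℝ E] [FiniteDimensional ℝ E]
  [MeasureSpace E] [BorelSpace E] [(volume : Measure E).IsAddHaarMeasure]

theorem integral_fderiv_sq_mul_rpow_le {f : E → ℝ} (hf : ContDiff ℝ 2 f)
    (hfc : HasCompactSupport f) {v : E} (hv : ‖v‖ ≤ 1) (a : ℝ) {δ : ℝ} (hδ : 0 < δ) :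
    ∫ z, fderiv ℝ f z v ^ 2 * japaneseBracket z ^ a ≤
      δ * (∫ z, fderiv ℝ (fun y => fderiv ℝ f y v) z v ^ 2 * japaneseBracket z ^ (a + 2))
        + (δ⁻¹ + a ^ 2) * ∫ z, f z ^ 2 * japaneseBracket z ^ (a - 2) := by
  set Df : E → ℝ := fun y => fderiv ℝ f y v
  set DDf : E → ℝ := fun y => fderiv ℝ Df y v
  have hw := fun b : ℝ => contDiff_japaneseBracket_rpow (E := E) b (m := 1)
  have hDf : ContDiff ℝ 1 Df := (hf.fderiv_right (m := 1) le_rfl).clm_apply contDiff_const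
  have hDfc : HasCompactSupport Df := hfc.fderiv_apply (𝕜 := ℝ) v
  have hDDf : Continuous DDf := (hDf.continuous_fderiv one_ne_zero).clm_apply continuous_const
  have hDDfc : HasCompactSupport DDf := hDfc.fderiv_apply (𝕜 := ℝ) v
  have hIBP : Integrable fun z => (Df z * fderiv ℝ (fun z => japaneseBracket z ^ a) z v
      + japaneseBracket z ^ a * DDf z) * f z :=
    (((hDf.continuous.mul (((hw a).continuous_fderiv one_ne_zero).clm_apply continuous_const)).add
      ((hw a).continuous.mul hDDf)).mul hf.continuous).integrable_of_hasCompactSupport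
      hfc.mul_left
  have hpt : ∀ z, -((Df z * fderiv ℝ (fun z => japaneseBracket z ^ a) z v
      + japaneseBracket z ^ a * DDf z) * f z) ≤
      δ / 2 * (DDf z ^ 2 * japaneseBracket z ^ (a + 2)) + 1 / 2 * (Df z ^ 2 * japaneseBracket z ^ a)
        + (δ⁻¹ + a ^ 2) / 2 * (f z ^ 2 * japaneseBracket z ^ (a - 2)) := fun z =>
    young_rpow_weights (japaneseBracket_pos z) hδ (abs_fderiv_japaneseBracket_rpow_le a z hv)
  have hA := (hf.continuous.integrable_sq_mul_of_hasCompactSupport (μ := volume) hfc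
    (hw (a - 2)).continuous).const_mul ((δ⁻¹ + a ^ 2) / 2)
  have hB := (hDDf.integrable_sq_mul_of_hasCompactSupport (μ := volume) hDDfc
    (hw (a + 2)).continuous).const_mul (δ / 2)
  have hC := (hDf.continuous.integrable_sq_mul_of_hasCompactSupport (μ := volume) hDfc
    (hw a).continuous).const_mul (1 / 2)
  have hle : ∫ z, Df z ^ 2 * japaneseBracket z ^ a ≤
      δ / 2 * (∫ z, DDf z ^ 2 * japaneseBracket z ^ (a + 2))
        + 1 / 2 * (∫ z, Df z ^ 2 * japaneseBracket z ^ a)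
        + (δ⁻¹ + a ^ 2) / 2 * ∫ z, f z ^ 2 * japaneseBracket z ^ (a - 2) := by
    have hX := integral_fderiv_sq_mul_eq_neg hf hfc (hw a) v
    rw [← integral_neg] at hX
    refine hX.trans_le ((integral_mono hIBP.neg ((hB.add hC).add hA) hpt).trans_eq ?_)
    rw [integral_add' (hB.add hC) hA, integral_add' hB hC, integral_const_mul,
      integral_const_mul, integral_const_mul]
  linarith

end WeightedEstimate

section WeightedDerivSq

variable {E : Type*} [NormedAddCommGroup E] [NormedSpace ℝ E] {u : E → ℝ}

theorem contDiff_iteratedFDeriv_apply (hu : ContDiff ℝ (⊤ : ℕ∞) u) (j : ℕ) (v : Fin j → E) :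
    ContDiff ℝ (⊤ : ℕ∞) fun z => iteratedFDeriv ℝ j u z v :=
  (ContinuousMultilinearMap.apply ℝ (fun _ : Fin j => E) ℝ v).contDiff.comp
    (hu.iteratedFDeriv_right (by exact_mod_cast le_top))

theorem hasCompactSupport_iteratedFDeriv_apply (hc : HasCompactSupport u) (j : ℕ)
    (v : Fin j → E) : HasCompactSupport fun z => iteratedFDeriv ℝ j u z v :=
  (hc.iteratedFDeriv j).comp_left
    (g := fun T : ContinuousMultilinearMap ℝ (fun _ : Fin j => E) ℝ => T v) rfl

variable [MeasureSpace E]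

noncomputable def weightedDerivSq (a : ℝ) (j : ℕ) (u : E → ℝ) : ℝ :=
  ∫ z, ‖iteratedFDeriv ℝ j u z‖ ^ 2 * japaneseBracket z ^ (2 * j + a)

theorem weightedDerivSq_nonneg (a : ℝ) (j : ℕ) (u : E → ℝ) : 0 ≤ weightedDerivSq a j u :=
  integral_nonneg fun z => mul_nonneg (sq_nonneg _) (japaneseBracket_rpow_nonneg z _)

variable [OpensMeasurableSpace E] [IsFiniteMeasureOnCompacts (volume : Measure E)]

theorem integrable_iteratedFDeriv_apply_sq_mul_rpow (hu : ContDiff ℝ (⊤ : ℕ∞) u)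
    (hc : HasCompactSupport u) (j : ℕ) (v : Fin j → E) (b : ℝ) :
    Integrable fun z => iteratedFDeriv ℝ j u z v ^ 2 * japaneseBracket z ^ b :=
  (contDiff_iteratedFDeriv_apply hu j v).continuous.integrable_sq_mul_of_hasCompactSupport
    (hasCompactSupport_iteratedFDeriv_apply hc j v) (continuous_japaneseBracket_rpow b)

theorem integrable_norm_iteratedFDeriv_sq_mul_rpow (hu : ContDiff ℝ (⊤ : ℕ∞) u)
    (hc : HasCompactSupport u) (j : ℕ) (b : ℝ) :
    Integrable fun z => ‖iteratedFDeriv ℝ j u z‖ ^ 2 * japaneseBracket z ^ b :=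
  (hu.continuous_iteratedFDeriv (by exact_mod_cast le_top)).norm
    |>.integrable_sq_mul_of_hasCompactSupport ((hc.iteratedFDeriv j).comp_left norm_zero)
      (continuous_japaneseBracket_rpow b)

end WeightedDerivSq

theorem weightedDerivSq_le_card_mul_sum {E ι : Type*} [NormedAddCommGroup E]
    [InnerProductSpace ℝ E] [MeasureSpace E] [OpensMeasurableSpace E]
    [IsFiniteMeasureOnCompacts (volume : Measure E)] [Fintype ι] (b : OrthonormalBasis ι ℝ E)
    {u : E → ℝ} (hu : ContDiff ℝ (⊤ : ℕ∞) u) (hc : HasCompactSupport u) (a : ℝ) (j : ℕ) :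
    weightedDerivSq a j u ≤ Fintype.card (Fin j → ι) * ∑ m : Fin j → ι,
      ∫ z, (iteratedFDeriv ℝ j u z fun i => b (m i)) ^ 2 * japaneseBracket z ^ (2 * j + a) := by
  have hint := fun m : Fin j → ι =>
    integrable_iteratedFDeriv_apply_sq_mul_rpow hu hc j (fun i => b (m i)) (2 * j + a)
  rw [← integral_finsetSum _ fun m _ => hint m, ← integral_const_mul]
  refine integral_mono (integrable_norm_iteratedFDeriv_sq_mul_rpow hu hc _ _)
    ((integrable_finsetSum _ fun m _ => hint m).const_mul _) fun z => ?_
  rw [← Finset.sum_mul, ← mul_assoc]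
  exact mul_le_mul_of_nonneg_right ((iteratedFDeriv ℝ j u z).norm_sq_le_card_mul_sum_sq b)
    (japaneseBracket_rpow_nonneg z _)

section OneStep

variable {E : Type*} [NormedAddCommGroup E] [InnerProductSpace ℝ E] [FiniteDimensional ℝ E]
  [MeasureSpace E] [BorelSpace E] [(volume : Measure E).IsAddHaarMeasure] {u : E → ℝ}

theorem integral_iteratedFDeriv_apply_sq_le (hu : ContDiff ℝ (⊤ : ℕ∞) u)
    (hc : HasCompactSupport u) (a : ℝ) {j : ℕ} {v : Fin (j + 1) → E} (hv : ∀ i, ‖v i‖ ≤ 1)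
    {δ : ℝ} (hδ : 0 < δ) :
    ∫ z, iteratedFDeriv ℝ (j + 1) u z v ^ 2 * japaneseBracket z ^ (2 * (j + 1 : ℕ) + a) ≤
      δ * weightedDerivSq a (j + 2) u
        + (δ⁻¹ + (2 * (j + 1 : ℕ) + a) ^ 2) * weightedDerivSq a j u := by
  have hdiff : ∀ i z, DifferentiableAt ℝ (iteratedFDeriv ℝ i u) z := fun i =>
    hu.differentiable_iteratedFDeriv (by exact_mod_cast WithTop.coe_lt_top _)
  have hDf : ∀ z, fderiv ℝ (fun y => iteratedFDeriv ℝ j u y (Fin.tail v)) z (v 0)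
      = iteratedFDeriv ℝ (j + 1) u z v := fun z =>
    ((hdiff j z).iteratedFDeriv_succ_apply_left').symm
  have hDDf : ∀ z, fderiv ℝ (fun y => iteratedFDeriv ℝ (j + 1) u y v) z (v 0)
      = iteratedFDeriv ℝ (j + 2) u z (Fin.cons (v 0) v) := fun z =>
    ((hdiff (j + 1) z).iteratedFDeriv_succ_apply_left' (m := Fin.cons (v 0) v)).symm
  have key := integral_fderiv_sq_mul_rpow_le
    ((contDiff_iteratedFDeriv_apply hu j (Fin.tail v)).of_le (WithTop.coe_le_coe.2 le_top))
    (hasCompactSupport_iteratedFDeriv_apply hc j (Fin.tail v)) (hv 0) (2 * (j + 1 : ℕ) + a) hδ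
  have hexp₂ : 2 * ((j + 1 : ℕ) : ℝ) + a + 2 = 2 * (j + 2 : ℕ) + a := by push_cast; ring
  have hexp₀ : 2 * ((j + 1 : ℕ) : ℝ) + a - 2 = 2 * j + a := by push_cast; ring
  simp only [hDf, hDDf, hexp₂, hexp₀] at key
  refine key.trans (add_le_add (mul_le_mul_of_nonneg_left ?_ hδ.le)
    (mul_le_mul_of_nonneg_left ?_ (by positivity)))
  all_goals
    refine integral_mono (integrable_iteratedFDeriv_apply_sq_mul_rpow hu hc _ _ _)
      (integrable_norm_iteratedFDeriv_sq_mul_rpow hu hc _ _) fun z => ?_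
  · exact mul_le_mul_of_nonneg_right ((iteratedFDeriv ℝ (j + 2) u z).sq_apply_le_norm_sq
      (Fin.cases (hv 0) hv)) (japaneseBracket_rpow_nonneg z _)
  · exact mul_le_mul_of_nonneg_right ((iteratedFDeriv ℝ j u z).sq_apply_le_norm_sq
      fun i => hv i.succ) (japaneseBracket_rpow_nonneg z _)

theorem ehrlingBound_weightedDerivSq_succ (a : ℝ) (j : ℕ) :
    EhrlingBound {u : E → ℝ | ContDiff ℝ (⊤ : ℕ∞) u ∧ HasCompactSupport u}
      (fun u j => weightedDerivSq a j u) j (j + 1) (j + 2) := by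
  intro ε hε
  set b := stdOrthonormalBasis ℝ E
  set N : ℝ := ((Fintype.card (Fin (j + 1) → Fin (Module.finrank ℝ E)) : ℕ) : ℝ)
  set δ := ε / (N ^ 2 + 1)
  have hδ : 0 < δ := by positivity
  set c := δ⁻¹ + (2 * (j + 1 : ℕ) + a) ^ 2
  refine ⟨N ^ 2 * c, by positivity, fun u ⟨hu, hc⟩ => ?_⟩
  calc weightedDerivSq a (j + 1) u
      ≤ N * ∑ m : Fin (j + 1) → Fin (Module.finrank ℝ E), ∫ z,
          (iteratedFDeriv ℝ (j + 1) u z fun i => b (m i)) ^ 2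
            * japaneseBracket z ^ (2 * (j + 1 : ℕ) + a) :=
        weightedDerivSq_le_card_mul_sum b hu hc a (j + 1)
    _ ≤ N * ∑ _m : Fin (j + 1) → Fin (Module.finrank ℝ E),
          (δ * weightedDerivSq a (j + 2) u + c * weightedDerivSq a j u) := by
        gcongr with m
        exact integral_iteratedFDeriv_apply_sq_le hu hc a (fun i => (b.orthonormal.1 (m i)).le) hδ
    _ = N ^ 2 * δ * weightedDerivSq a (j + 2) u + N ^ 2 * c * weightedDerivSq a j u := by
        rw [Finset.sum_const, Finset.card_univ, nsmul_eq_mul]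
        ring
    _ ≤ ε * weightedDerivSq a (j + 2) u + N ^ 2 * c * weightedDerivSq a j u := by
        gcongr
        · exact weightedDerivSq_nonneg a _ u
        · rw [mul_div_assoc', div_le_iff₀ (by positivity)]
          nlinarith

end OneStep

theorem Dnorm_eq_sqrt_weightedDerivSq (n j : ℕ) (u : EuclideanSpace ℝ (Fin n) → ℝ) :
    Dnorm n j u = √(weightedDerivSq (1 - n : ℝ) j u) := by
  unfold Dnorm weightedDerivSq japaneseBracket
  congr 2 with z
  rw [mul_pow, ← Real.rpow_mul_natCast (Real.sqrt_nonneg _)]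
  congr 2
  push_cast
  ring

theorem Real.sqrt_le_mul_sqrt_add_mul_sqrt {x y z c d : ℝ} (hy : 0 ≤ y) (hz : 0 ≤ z)
    (hc : 0 ≤ c) (hd : 0 ≤ d) (h : x ≤ c ^ 2 * y + d ^ 2 * z) : √x ≤ c * √y + d * √z := by
  rw [Real.sqrt_le_iff]
  refine ⟨by positivity, h.trans ?_⟩
  nlinarith [Real.sq_sqrt hy, Real.sq_sqrt hz, mul_nonneg (mul_nonneg hc hd)
    (mul_nonneg (Real.sqrt_nonneg y) (Real.sqrt_nonneg z))]

theorem stmt11_general (n k : ℕ) :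
    ∀ ν : ℝ, 0 < ν → ∀ j : ℕ, j < k →
      ∃ C : ℝ, 0 < C ∧ ∀ u : EuclideanSpace ℝ (Fin n) → ℝ,
        ContDiff ℝ (⊤:ℕ∞) u → HasCompactSupport u →
        Dnorm n j u ≤ ν * Dnorm n k u + C * Dnorm n 0 u := by
  intro ν hν j hjk
  obtain ⟨C, hC, hbound⟩ := EhrlingBound.of_step
    (fun (u : EuclideanSpace ℝ (Fin n) → ℝ) _ j => weightedDerivSq_nonneg (1 - n : ℝ) j u)
    (ehrlingBound_weightedDerivSq_succ (1 - n : ℝ)) hjk (ν ^ 2) (by positivity)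
  refine ⟨√C + 1, by positivity, fun u hu hc => ?_⟩
  simp only [Dnorm_eq_sqrt_weightedDerivSq]
  calc √(weightedDerivSq (1 - n) j u)
      ≤ ν * √(weightedDerivSq (1 - n) k u) + √C * √(weightedDerivSq (1 - n) 0 u) := by
        refine Real.sqrt_le_mul_sqrt_add_mul_sqrt (weightedDerivSq_nonneg _ _ _)
          (weightedDerivSq_nonneg _ _ _) hν.le (Real.sqrt_nonneg C) ?_
        rw [Real.sq_sqrt hC]
        exact hbound u ⟨hu, hc⟩
    _ ≤ ν * √(weightedDerivSq (1 - n) k u) + (√C + 1) * √(weightedDerivSq (1 - n) 0 u) := by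
        gcongr
        linarith

/-- Interpolation inequality for the weighted norms `D_j`: for every `ν > 0` and
`0 ≤ j < k` there is a constant `C = C(ν, j, k, n)` such that
`D_j(u) ≤ ν D_k(u) + C D_0(u)` for all `u ∈ C_c^∞(ℝⁿ)`. -/
theorem stmt11 (n k : ℕ) (hn : 1 ≤ n) (hk : 1 ≤ k) :
    ∀ ν : ℝ, 0 < ν → ∀ j : ℕ, j < k →
      ∃ C : ℝ, 0 < C ∧ ∀ u : EuclideanSpace ℝ (Fin n) → ℝ,
        ContDiff ℝ (⊤:ℕ∞) u → HasCompactSupport u →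
        Dnorm n j u ≤ ν * Dnorm n k u + C * Dnorm n 0 u :=
  stmt11_general n k
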